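/- In the or-gadget, if X is a set of at most 2 non-terminal vertices (or at most 2 arcs) such that the gadget minus X is acyclic with topological ordering π, then x₁ precedes x₁' in π, or x₂ precedes x₂' in π, or x₃ precedes x₃' in π. -/
import Mathlib


/-- The vertices of the or-gadget: six terminals and six non-terminals. -/
inductive OrV : Type
  | x1 | x1' | x2 | x2' | x3 | x3'
  | v1a | v1b | v2a | v2b | v3a | v3b
deriving DecidableEq

open OrV

/-- The arcs of the or-gadget. -/
def orEdges : List (OrV × OrV) :=
  [(x1, v1a), (v1b, x1'), (x2, v2a), (v2b, x2'), (x3, v3a), (v3b, x3'),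
   (v1a, v1b), (v2a, v2b), (v3a, v3b),
   (v1b, v2a), (v2b, v3a), (v3b, v1a),
   (v1b, v3a), (v2b, v1a), (v3b, v2a)]

def orE (a b : OrV) : Prop := (a, b) ∈ orEdges

def nonTerminal : Set OrV := {v1a, v1b, v2a, v2b, v3a, v3b}

def terminal : Set OrV := {x1, x1', x2, x2', x3, x3'}

lemma three_card {α : Type*} [DecidableEq α] {F : Finset α} {a b c : α}
    (ha : a ∈ F) (hb : b ∈ F) (hc : c ∈ F)
    (hab : a ≠ b) (hac : a ≠ c) (hbc : b ≠ c) : 3 ≤ F.card := by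
  have hsub : ({a, b, c} : Finset α) ⊆ F := by
    intro x hx
    simp only [Finset.mem_insert, Finset.mem_singleton] at hx
    rcases hx with rfl | rfl | rfl <;> assumption
  have h3 : ({a, b, c} : Finset α).card = 3 := by
    rw [Finset.card_insert_of_notMem (by simp [hab, hac]),
        Finset.card_insert_of_notMem (by simp [hbc]), Finset.card_singleton]
  calc 3 = ({a, b, c} : Finset α).card := h3.symm
    _ ≤ F.card := Finset.card_le_card hsub

/-- If removing at most `2` non-terminal vertices (resp. at most `2` arcs) from the
or-gadget leaves an acyclic digraph with topological ordering `π`, then `π` puts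
`x1` before `x1'`, or `x2` before `x2'`, or `x3` before `x3'`. -/
theorem orGadget_topological_ordering_satisfies :
    (∀ (X : Finset OrV), ↑X ⊆ nonTerminal → X.card ≤ 2 →
      ∀ π : OrV → ℕ, Set.InjOn π {v | v ∉ X} →
        (∀ a b, orE a b → a ∉ X → b ∉ X → π a < π b) →
        (π x1 < π x1' ∨ π x2 < π x2' ∨ π x3 < π x3')) ∧
    (∀ (F : Finset (OrV × OrV)), ↑F ⊆ {p : OrV × OrV | orE p.1 p.2} → F.card ≤ 2 →
      ∀ π : OrV → ℕ, Function.Injective π →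
        (∀ a b, orE a b → (a, b) ∉ F → π a < π b) →
        (π x1 < π x1' ∨ π x2 < π x2' ∨ π x3 < π x3')) := by
  constructor
  · intro X hX hcard π _ hord
    have hx1 : x1 ∉ X := fun h => by simpa [nonTerminal] using hX h
    have hx1' : x1' ∉ X := fun h => by simpa [nonTerminal] using hX h
    have hx2 : x2 ∉ X := fun h => by simpa [nonTerminal] using hX h
    have hx2' : x2' ∉ X := fun h => by simpa [nonTerminal] using hX h
    have hx3 : x3 ∉ X := fun h => by simpa [nonTerminal] using hX h
    have hx3' : x3' ∉ X := fun h => by simpa [nonTerminal] using hX h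
    have key : (v1a ∉ X ∧ v1b ∉ X) ∨ (v2a ∉ X ∧ v2b ∉ X) ∨ (v3a ∉ X ∧ v3b ∉ X) := by
      by_cases d1 : v1a ∈ X ∨ v1b ∈ X
      · by_cases d2 : v2a ∈ X ∨ v2b ∈ X
        · by_cases d3 : v3a ∈ X ∨ v3b ∈ X
          · exfalso
            have : 3 ≤ X.card := by
              rcases d1 with e1 | e1 <;> rcases d2 with e2 | e2 <;> rcases d3 with e3 | e3 <;>
                exact three_card e1 e2 e3 (by decide) (by decide) (by decide)
            omega
          · push_neg at d3; exact Or.inr (Or.inr d3)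
        · push_neg at d2; exact Or.inr (Or.inl d2)
      · push_neg at d1; exact Or.inl d1
    rcases key with ⟨ha, hb⟩ | ⟨ha, hb⟩ | ⟨ha, hb⟩
    · exact Or.inl (lt_trans (lt_trans (hord x1 v1a (by simp [orE, orEdges]) hx1 ha)
        (hord v1a v1b (by simp [orE, orEdges]) ha hb)) (hord v1b x1' (by simp [orE, orEdges]) hb hx1'))
    · exact Or.inr (Or.inl (lt_trans (lt_trans (hord x2 v2a (by simp [orE, orEdges]) hx2 ha)
        (hord v2a v2b (by simp [orE, orEdges]) ha hb)) (hord v2b x2' (by simp [orE, orEdges]) hb hx2')))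
    · exact Or.inr (Or.inr (lt_trans (lt_trans (hord x3 v3a (by simp [orE, orEdges]) hx3 ha)
        (hord v3a v3b (by simp [orE, orEdges]) ha hb)) (hord v3b x3' (by simp [orE, orEdges]) hb hx3')))
  · intro F _ hcard π _ hord
    have key : ((x1, v1a) ∉ F ∧ (v1a, v1b) ∉ F ∧ (v1b, x1') ∉ F) ∨
        ((x2, v2a) ∉ F ∧ (v2a, v2b) ∉ F ∧ (v2b, x2') ∉ F) ∨
        ((x3, v3a) ∉ F ∧ (v3a, v3b) ∉ F ∧ (v3b, x3') ∉ F) := by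
      by_cases d1 : (x1, v1a) ∈ F ∨ (v1a, v1b) ∈ F ∨ (v1b, x1') ∈ F
      · by_cases d2 : (x2, v2a) ∈ F ∨ (v2a, v2b) ∈ F ∨ (v2b, x2') ∈ F
        · by_cases d3 : (x3, v3a) ∈ F ∨ (v3a, v3b) ∈ F ∨ (v3b, x3') ∈ F
          · exfalso
            have : 3 ≤ F.card := by
              rcases d1 with e1 | e1 | e1 <;> rcases d2 with e2 | e2 | e2 <;>
                rcases d3 with e3 | e3 | e3 <;>
                exact three_card e1 e2 e3 (by decide) (by decide) (by decide)
            omega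
          · push_neg at d3; exact Or.inr (Or.inr d3)
        · push_neg at d2; exact Or.inr (Or.inl d2)
      · push_neg at d1; exact Or.inl d1
    rcases key with ⟨ha, hb, hc⟩ | ⟨ha, hb, hc⟩ | ⟨ha, hb, hc⟩
    · exact Or.inl (lt_trans (lt_trans (hord x1 v1a (by simp [orE, orEdges]) ha)
        (hord v1a v1b (by simp [orE, orEdges]) hb)) (hord v1b x1' (by simp [orE, orEdges]) hc))
    · exact Or.inr (Or.inl (lt_trans (lt_trans (hord x2 v2a (by simp [orE, orEdges]) ha)
        (hord v2a v2b (by simp [orE, orEdges]) hb)) (hord v2b x2' (by simp [orE, orEdges]) hc)))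
    · exact Or.inr (Or.inr (lt_trans (lt_trans (hord x3 v3a (by simp [orE, orEdges]) ha)
        (hord v3a v3b (by simp [orE, orEdges]) hb)) (hord v3b x3' (by simp [orE, orEdges]) hc)))
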